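/- With A, A^s and S as above (rad²(A) = 0), a module M ∈ Mod A is indecomposable if and only if S(M) = (M/JM; JM) is indecomposable in Mod A^s. -/

import Mathlib

/-!
An `A^s`-endomorphism of `S(M) = (M/JM; JM)` is the same as a pair `(f, g)` of `A`-endomorphisms
of `M/JM` and of `JM` intertwined by the multiplication `J × M/JM → JM` (well defined because
`J² = 0`). An idempotent `e` of `M` restricts to such a pair and is recovered from it, so `M` is
indecomposable when `S(M)` is.

Conversely, an idempotent compatible pair `(f, g)` lifts to a direct sum decomposition of `M`. Let
`V₁, V₂ ⊆ M` be the preimages of `im f`, `ker f`, and `Q₁ = im g`, `Q₂ = ker g`. Compatibility gives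
`J Vᵢ ⊆ Qᵢ`, so `Vᵢ / Qᵢ` is a module over the semisimple ring `A/J` and `JM / Qᵢ` has a complement
`Cᵢ / Qᵢ` in it. Then `M = C₁ ⊕ C₂`, and indecomposability of `M` forces `(f, g)` to be trivial.
-/

/-- The Jacobson radical `J = rad A` of a ring, as a module over `A`. -/
abbrev JacMod (A : Type) [Ring A] : Type := ↥(Ideal.jacobson (⊥ : Ideal A))

/-- The separated algebra `A^s = (A/J, 0; J, A/J)` of a radical square zero artin algebra,
realized as the trivial square-zero extension of `(A/J) × (A/J)` by the bimodule `J`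
(the left action through the second factor, the right action through the first factor,
corresponding to lower-triangular 2×2 matrix multiplication). -/
abbrev SepAlg (A : Type) [Ring A] (S : Type) [Ring S]
    [Module (S × S) (JacMod A)] [Module (S × S)ᵐᵒᵖ (JacMod A)]
    [SMulCommClass (S × S) (S × S)ᵐᵒᵖ (JacMod A)] : Type :=
  TrivSqZeroExt (S × S) (JacMod A)

/-- The submodule `JM ⊆ M` generated by the elements `j • m`, `j ∈ J = rad A`. -/
noncomputable def radSubmodule (A : Type) [Ring A] (M : Type) [AddCommGroup M]
    [Module A M] : Submodule A M :=
  Submodule.span A {x : M | ∃ j ∈ Ideal.jacobson (⊥ : Ideal A), ∃ m : M, j • m = x}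

/-- The underlying abelian group of the separated module `S(M) = (M/JM; JM)`. -/
abbrev SepMod (A : Type) [Ring A] (M : Type) [AddCommGroup M] [Module A M] : Type :=
  (M ⧸ radSubmodule A M) × ↥(radSubmodule A M)

/-- A module is indecomposable iff it is nonzero and admits no nontrivial direct sum
decomposition; equivalently, iff it is nonzero and its only idempotent endomorphisms are
`0` and the identity. -/
def IsIndecomposableModule (A : Type) [Ring A] (M : Type) [AddCommGroup M]
    [Module A M] : Prop :=
  (∃ m : M, m ≠ 0) ∧
    ∀ e : M →ₗ[A] M, e ∘ₗ e = e → e = 0 ∨ e = LinearMap.id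

open Submodule

theorem isCompl_of_inf_eq_of_sup_eq {α : Type*} [Lattice α] [BoundedOrder α]
    {N V₁ V₂ Q₁ Q₂ C₁ C₂ : α} (hV_inf : V₁ ⊓ V₂ = N) (hV_sup : V₁ ⊔ V₂ = ⊤)
    (hQ_inf : Q₁ ⊓ Q₂ = ⊥) (hQ_sup : Q₁ ⊔ Q₂ = N)
    (hC₁_inf : C₁ ⊓ N = Q₁) (hC₁_sup : C₁ ⊔ N = V₁)
    (hC₂_inf : C₂ ⊓ N = Q₂) (hC₂_sup : C₂ ⊔ N = V₂) : IsCompl C₁ C₂ := by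
  constructor
  · have hle : C₁ ⊓ C₂ ≤ N :=
      hV_inf ▸ inf_le_inf (hC₁_sup ▸ le_sup_left) (hC₂_sup ▸ le_sup_left)
    rw [disjoint_iff, ← hQ_inf, ← hC₁_inf, ← hC₂_inf]
    exact le_antisymm (le_inf (le_inf inf_le_left hle) (le_inf inf_le_right hle))
      (inf_le_inf inf_le_left inf_le_left)
  · have hle : N ≤ C₁ ⊔ C₂ :=
      hQ_sup ▸ sup_le_sup (hC₁_inf ▸ inf_le_left) (hC₂_inf ▸ inf_le_left)
    rw [codisjoint_iff, ← hV_sup, ← hC₁_sup, ← hC₂_sup]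
    exact le_antisymm (sup_le_sup le_sup_left le_sup_left)
      (sup_le (sup_le le_sup_left hle) (sup_le le_sup_right hle))

section Modules

variable {R M : Type*} [Ring R] [AddCommGroup M] [Module R M]

theorem Submodule.comap_mkQ_sup (p : Submodule R M) (X Y : Submodule R (M ⧸ p)) :
    comap p.mkQ (X ⊔ Y) = comap p.mkQ X ⊔ comap p.mkQ Y := by
  conv_lhs => rw [← map_comap_eq_of_surjective p.mkQ_surjective X,
    ← map_comap_eq_of_surjective p.mkQ_surjective Y, ← map_sup, comap_map_mkQ]
  exact sup_eq_right.mpr (le_sup_of_le_left (le_comap_mkQ p X))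

theorem Submodule.exists_inf_eq_and_sup_eq_of_smul_le {I : Ideal R} [I.IsTwoSided]
    [IsSemisimpleRing (R ⧸ I)] {Q N V : Submodule R M} (hQN : Q ≤ N) (hNV : N ≤ V)
    (hV : I • V ≤ Q) : ∃ C : Submodule R M, C ⊓ N = Q ∧ C ⊔ N = V := by
  set V' := V.map Q.mkQ
  have hV' : Module.IsTorsionBySet R V' I := by
    rintro ⟨_, v, hv, rfl⟩ ⟨j, hj⟩
    exact Subtype.ext <| (Quotient.mk_eq_zero Q).mpr (hV (smul_mem_smul hj hv))
  have : IsSemisimpleModule R V' := letI := hV'.module; hV'.isSemisimpleModule_iff.mp inferInstance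
  have : ComplementedLattice (Set.Iic V') := V'.mapIic.complementedLattice_iff.mp inferInstance
  obtain ⟨D, hD⟩ := ComplementedLattice.exists_isCompl (⟨N.map Q.mkQ, map_mono hNV⟩ : Set.Iic V')
  rw [Set.Iic.isCompl_iff, disjoint_iff] at hD
  have hN : comap Q.mkQ (N.map Q.mkQ) = N := by rw [comap_map_mkQ, sup_eq_right.mpr hQN]
  refine ⟨comap Q.mkQ D, ?_, ?_⟩
  · rw [← hN, ← comap_inf, inf_comm, hD.1, comap_bot, ker_mkQ]
  · rw [← hN, ← comap_mkQ_sup, sup_comm, hD.2, comap_map_mkQ, sup_eq_right.mpr (hQN.trans hNV)]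

theorem LinearMap.IsIdempotentElem.eq_id_of_ker_eq_bot {f : M →ₗ[R] M} (hf : IsIdempotentElem f)
    (h : LinearMap.ker f = ⊥) : f = LinearMap.id := by
  rw [LinearMap.IsIdempotentElem.ker_eq_range hf, LinearMap.range_eq_bot, sub_eq_zero] at h
  exact h.symm

end Modules

theorem IsIndecomposableModule.eq_bot_or_eq_bot_of_isCompl {A M : Type} [Ring A]
    [AddCommGroup M] [Module A M] (hM : IsIndecomposableModule A M) {C₁ C₂ : Submodule A M}
    (h : IsCompl C₁ C₂) : C₁ = ⊥ ∨ C₂ = ⊥ := by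
  rcases hM.2 (C₁.projection C₂ h) (isIdempotentElem_projection h) with h0 | h1
  · exact .inl <| by rw [← range_projection h, h0, LinearMap.range_zero]
  · exact .inr <| by rw [← ker_projection h, h1, LinearMap.ker_id]

theorem IsIndecomposableModule.pair_eq_zero_or_eq_id {R M : Type} [Ring R]
    [AddCommGroup M] [Module R M] {I : Ideal R} [I.IsTwoSided] [IsSemisimpleRing (R ⧸ I)]
    (hM : IsIndecomposableModule R M) {N : Submodule R M} {f : (M ⧸ N) →ₗ[R] M ⧸ N}
    {g : N →ₗ[R] N} (hf : IsIdempotentElem f) (hg : IsIdempotentElem g)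
    (h₁ : I • comap N.mkQ (LinearMap.range f) ≤ map N.subtype (LinearMap.range g))
    (h₂ : I • comap N.mkQ (LinearMap.ker f) ≤ map N.subtype (LinearMap.ker g)) :
    (f = 0 ∧ g = 0) ∨ (f = LinearMap.id ∧ g = LinearMap.id) := by
  have hf' := LinearMap.IsIdempotentElem.isCompl hf
  have hg' := LinearMap.IsIdempotentElem.isCompl hg
  have hV_inf : comap N.mkQ (LinearMap.range f) ⊓ comap N.mkQ (LinearMap.ker f) = N := by
    rw [← comap_inf, hf'.inf_eq_bot, comap_bot, ker_mkQ]
  have hV_sup : comap N.mkQ (LinearMap.range f) ⊔ comap N.mkQ (LinearMap.ker f) = ⊤ := by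
    rw [← comap_mkQ_sup, hf'.sup_eq_top, comap_top]
  have hQ_inf : map N.subtype (LinearMap.range g) ⊓ map N.subtype (LinearMap.ker g) = ⊥ := by
    rw [← map_inf _ N.injective_subtype, hg'.inf_eq_bot, Submodule.map_bot]
  have hQ_sup : map N.subtype (LinearMap.range g) ⊔ map N.subtype (LinearMap.ker g) = N := by
    rw [← Submodule.map_sup, hg'.sup_eq_top, map_subtype_top]
  obtain ⟨C₁, hC₁_inf, hC₁_sup⟩ :=
    exists_inf_eq_and_sup_eq_of_smul_le (map_subtype_le _ _) (le_comap_mkQ _ _) h₁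
  obtain ⟨C₂, hC₂_inf, hC₂_sup⟩ :=
    exists_inf_eq_and_sup_eq_of_smul_le (map_subtype_le _ _) (le_comap_mkQ _ _) h₂
  rcases hM.eq_bot_or_eq_bot_of_isCompl (isCompl_of_inf_eq_of_sup_eq hV_inf hV_sup hQ_inf hQ_sup
    hC₁_inf hC₁_sup hC₂_inf hC₂_sup) with rfl | rfl
  · refine .inl ⟨LinearMap.range_eq_bot.mp ?_, LinearMap.range_eq_bot.mp ?_⟩
    · exact comap_injective_of_surjective N.mkQ_surjective (by simpa using hC₁_sup.symm)
    · exact map_injective_of_injective N.injective_subtype (by simpa using hC₁_inf.symm)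
  · refine .inr ⟨LinearMap.IsIdempotentElem.eq_id_of_ker_eq_bot hf ?_,
      LinearMap.IsIdempotentElem.eq_id_of_ker_eq_bot hg ?_⟩
    · exact comap_injective_of_surjective N.mkQ_surjective (by simpa using hC₂_sup.symm)
    · exact map_injective_of_injective N.injective_subtype (by simpa using hC₂_inf.symm)

section RadicalLayers

variable {A M : Type} [Ring A] [AddCommGroup M] [Module A M]

theorem radSubmodule_eq_jacobson_smul_top :
    radSubmodule A M = Ideal.jacobson (⊥ : Ideal A) • (⊤ : Submodule A M) :=
  le_antisymm (span_le.mpr fun _ ⟨_, hj, _, hx⟩ => hx ▸ smul_mem_smul hj trivial)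
    (smul_le.mpr fun j hj m _ => subset_span ⟨j, hj, m, rfl⟩)

theorem smul_mem_radSubmodule {j : A} (hj : j ∈ Ideal.jacobson (⊥ : Ideal A)) (m : M) :
    j • m ∈ radSubmodule A M :=
  subset_span ⟨j, hj, m, rfl⟩

theorem smul_eq_zero_of_mem_radSubmodule
    (hJ2 : ∀ x ∈ Ideal.jacobson (⊥ : Ideal A), ∀ y ∈ Ideal.jacobson (⊥ : Ideal A), x * y = 0)
    {j : A} (hj : j ∈ Ideal.jacobson (⊥ : Ideal A)) {x : M} (hx : x ∈ radSubmodule A M) :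
    j • x = 0 := by
  have hJJ : Ideal.jacobson (⊥ : Ideal A) * Ideal.jacobson ⊥ = ⊥ :=
    eq_bot_iff.mpr <| mul_le.mpr fun x hx y hy => (hJ2 x hx y hy).symm ▸ zero_mem _
  rw [radSubmodule_eq_jacobson_smul_top] at hx
  have := smul_mem_smul hj hx
  rwa [← Submodule.mul_smul, hJJ, bot_smul, mem_bot] at this

/-- `(f, g)` is a pair of components of an `A^s`-endomorphism of `S(M)`: the multiplication
`J × M/JM → JM`, `(j, m + JM) ↦ j m`, intertwines `f` and `g`. -/
def RadCompatible (f : (M ⧸ radSubmodule A M) →ₗ[A] M ⧸ radSubmodule A M)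
    (g : radSubmodule A M →ₗ[A] radSubmodule A M) : Prop :=
  ∀ j (hj : j ∈ Ideal.jacobson (⊥ : Ideal A)) (m m' : M),
    f (Submodule.Quotient.mk m) = Submodule.Quotient.mk m' →
      (g ⟨j • m, smul_mem_radSubmodule hj m⟩ : M) = j • m'

variable (A M) in
/-- Indecomposability of `S(M)`, read off from the description of its endomorphisms as
`RadCompatible` pairs. -/
def IsSepIndecomposable : Prop :=
  (∃ m : M, m ≠ 0) ∧
    ∀ (f : (M ⧸ radSubmodule A M) →ₗ[A] M ⧸ radSubmodule A M)
      (g : radSubmodule A M →ₗ[A] radSubmodule A M),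
      IsIdempotentElem f → IsIdempotentElem g → RadCompatible f g →
        (f = 0 ∧ g = 0) ∨ (f = LinearMap.id ∧ g = LinearMap.id)

theorem RadCompatible.jacobson_smul_comap_range_le
    {f : (M ⧸ radSubmodule A M) →ₗ[A] M ⧸ radSubmodule A M}
    {g : radSubmodule A M →ₗ[A] radSubmodule A M} (hfg : RadCompatible f g)
    (hf : IsIdempotentElem f) :
    Ring.jacobson A • comap (radSubmodule A M).mkQ (LinearMap.range f) ≤
      map (radSubmodule A M).subtype (LinearMap.range g) := by
  refine smul_le.mpr fun j hj m hm => ?_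
  rw [← Ideal.jacobson_bot] at hj
  have hfix := hfg j hj m m ((LinearMap.IsIdempotentElem.mem_range_iff hf).mp hm)
  exact ⟨⟨j • m, smul_mem_radSubmodule hj m⟩, ⟨_, Subtype.ext hfix⟩, rfl⟩

theorem RadCompatible.jacobson_smul_comap_ker_le
    {f : (M ⧸ radSubmodule A M) →ₗ[A] M ⧸ radSubmodule A M}
    {g : radSubmodule A M →ₗ[A] radSubmodule A M} (hfg : RadCompatible f g) :
    Ring.jacobson A • comap (radSubmodule A M).mkQ (LinearMap.ker f) ≤
      map (radSubmodule A M).subtype (LinearMap.ker g) := by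
  refine smul_le.mpr fun j hj m hm => ?_
  rw [← Ideal.jacobson_bot] at hj
  have hkill := hfg j hj m 0 (by simpa using hm)
  rw [smul_zero] at hkill
  exact ⟨⟨j • m, smul_mem_radSubmodule hj m⟩, Subtype.ext hkill, rfl⟩

theorem exists_ne_zero_sepMod_iff :
    (∃ p : SepMod A M, p ≠ 0) ↔ ∃ m : M, m ≠ 0 := by
  constructor
  · rintro ⟨⟨x, u⟩, hp⟩
    by_contra! h
    obtain ⟨m, rfl⟩ := Submodule.Quotient.mk_surjective _ x
    exact hp (Prod.ext (by simp [h m]) (Subtype.ext (h u)))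
  · rintro ⟨m, hm⟩
    by_cases hmN : m ∈ radSubmodule A M
    · exact ⟨(0, ⟨m, hmN⟩), fun h => hm (congr_arg (fun p : SepMod A M => (p.2 : M)) h)⟩
    · exact ⟨(Submodule.Quotient.mk m, 0),
        fun h => hmN ((Submodule.Quotient.mk_eq_zero _).mp (congr_arg Prod.fst h))⟩

theorem IsIndecomposableModule.isSepIndecomposable [IsArtinianRing A]
    (hM : IsIndecomposableModule A M) : IsSepIndecomposable A M :=
  ⟨hM.1, fun _ _ hf hg hfg => hM.pair_eq_zero_or_eq_id hf hg
    (hfg.jacobson_smul_comap_range_le hf) hfg.jacobson_smul_comap_ker_le⟩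

theorem IsSepIndecomposable.isIndecomposableModule
    (hJ2 : ∀ x ∈ Ideal.jacobson (⊥ : Ideal A), ∀ y ∈ Ideal.jacobson (⊥ : Ideal A), x * y = 0)
    (h : IsSepIndecomposable A M) : IsIndecomposableModule A M := by
  refine ⟨h.1, fun e he => ?_⟩
  have he' (m : M) : e (e m) = e m := LinearMap.congr_fun he m
  have hN : radSubmodule A M ≤ comap e (radSubmodule A M) := by
    rw [radSubmodule_eq_jacobson_smul_top]
    exact smul_top_le_comap_smul_top _ e
  set f := (radSubmodule A M).mapQ (radSubmodule A M) e hN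
  set g : radSubmodule A M →ₗ[A] radSubmodule A M := e.restrict fun _ hx => hN hx
  have hfg : RadCompatible f g := by
    intro j hj m m' hm
    rw [mapQ_apply, Submodule.Quotient.eq] at hm
    change e (j • m) = j • m'
    rw [map_smul, ← sub_eq_zero, ← smul_sub, smul_eq_zero_of_mem_radSubmodule hJ2 hj hm]
  rcases h.2 f g (by ext; simp [f, he']) (by ext; simp [g, he']) hfg with ⟨hf, hg⟩ | ⟨hf, hg⟩
  · refine .inl (LinearMap.ext fun m => ?_)
    have hm : e m ∈ radSubmodule A M :=
      (Submodule.Quotient.mk_eq_zero _).mp (LinearMap.congr_fun hf (Submodule.Quotient.mk m))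
    rw [← he', LinearMap.zero_apply]
    exact congr_arg Subtype.val (LinearMap.congr_fun hg ⟨e m, hm⟩)
  · refine .inr (LinearMap.ext fun m => ?_)
    have hm : m - e m ∈ radSubmodule A M :=
      (Submodule.Quotient.eq _).mp (LinearMap.congr_fun hf (Submodule.Quotient.mk m)).symm
    have hfix : e (m - e m) = m - e m := congr_arg Subtype.val (LinearMap.congr_fun hg ⟨_, hm⟩)
    rw [map_sub, he', sub_self, eq_comm, sub_eq_zero] at hfix
    exact hfix.symm

end RadicalLayers

theorem Prod.map_eq_map_iff {α β γ δ : Type*} [Nonempty α] [Nonempty β] {f f' : α → γ}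
    {g g' : β → δ} : Prod.map f g = Prod.map f' g' ↔ f = f' ∧ g = g' := by
  refine ⟨fun h => ⟨funext fun a => ?_, funext fun b => ?_⟩, fun ⟨hf, hg⟩ => hf ▸ hg ▸ rfl⟩
  · exact congr_arg Prod.fst (congr_fun h (a, Classical.arbitrary β))
  · exact congr_arg Prod.snd (congr_fun h (Classical.arbitrary α, b))

section ProdMap

variable {R R' P Q : Type*} [Semiring R] [Semiring R'] [AddCommMonoid P] [AddCommMonoid Q]
  [Module R (P × Q)] [Module R' P] [Module R' Q]

theorem LinearMap.eq_iff_of_coe_eq_prod_map {E E' : P × Q →ₗ[R] P × Q}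
    {f f' : P →ₗ[R'] P} {g g' : Q →ₗ[R'] Q} (hE : ⇑E = Prod.map f g)
    (hE' : ⇑E' = Prod.map f' g') : E = E' ↔ f = f' ∧ g = g' := by
  rw [← DFunLike.coe_injective.eq_iff, hE, hE', Prod.map_eq_map_iff,
    DFunLike.coe_injective.eq_iff, DFunLike.coe_injective.eq_iff]

theorem LinearMap.comp_self_eq_iff_of_coe_eq_prod_map {E : P × Q →ₗ[R] P × Q}
    {f : P →ₗ[R'] P} {g : Q →ₗ[R'] Q} (hE : ⇑E = Prod.map f g) :
    E ∘ₗ E = E ↔ IsIdempotentElem f ∧ IsIdempotentElem g :=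
  eq_iff_of_coe_eq_prod_map (by rw [coe_comp, hE, Prod.map_comp_map]; rfl) hE

end ProdMap

section SeparatedModule

variable {A S M : Type} [Ring A] [Ring S] {π : A →+* S}
  [Module (S × S) (JacMod A)] [Module (S × S)ᵐᵒᵖ (JacMod A)]
  [SMulCommClass (S × S) (S × S)ᵐᵒᵖ (JacMod A)]
  [AddCommGroup M] [Module A M] [Module (SepAlg A S) (SepMod A M)]

variable (hM2 : ∀ (j : JacMod A) (m : M) (u : ↥(radSubmodule A M)),
      ((TrivSqZeroExt.inr j : SepAlg A S) •
          ((Submodule.Quotient.mk m, u) : SepMod A M)).1 = 0 ∧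
      ((((TrivSqZeroExt.inr j : SepAlg A S) •
          ((Submodule.Quotient.mk m, u) : SepMod A M)).2 : M)) = (j : A) • m)
include hM2

theorem inr_smul_sepMod (j : JacMod A) (m : M) (u : radSubmodule A M) :
    (TrivSqZeroExt.inr j : SepAlg A S) • ((Submodule.Quotient.mk m, u) : SepMod A M) =
      (0, ⟨(j : A) • m, smul_mem_radSubmodule j.2 m⟩) :=
  Prod.ext (hM2 j m u).1 (Subtype.ext (hM2 j m u).2)

variable (hM1 : ∀ (x y : A) (p : SepMod A M),
      (TrivSqZeroExt.inl ((π x, π y) : S × S) : SepAlg A S) • p = (x • p.1, y • p.2))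
include hM1

theorem exists_radCompatible_of_linearMap (E : SepMod A M →ₗ[SepAlg A S] SepMod A M) :
    ∃ f g, RadCompatible f g ∧ ⇑E = Prod.map f g := by
  have hfst (x : M ⧸ radSubmodule A M) : E (x, 0) = ((E (x, 0)).1, 0) :=
    calc E (x, 0) = E ((TrivSqZeroExt.inl ((π 1, π 0) : S × S) : SepAlg A S) • (x, 0)) := by
          rw [hM1]; simp
      _ = ((E (x, 0)).1, 0) := by rw [E.map_smul, hM1]; simp
  have hsnd (u : radSubmodule A M) : E (0, u) = (0, (E (0, u)).2) :=
    calc E (0, u) = E ((TrivSqZeroExt.inl ((π 0, π 1) : S × S) : SepAlg A S) • (0, u)) := by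
          rw [hM1]; simp
      _ = (0, (E (0, u)).2) := by rw [E.map_smul, hM1]; simp
  let EA : SepMod A M →ₗ[A] SepMod A M :=
    { toFun := E
      map_add' := E.map_add
      map_smul' := fun a p => by
        have h := E.map_smul (TrivSqZeroExt.inl ((π a, π a) : S × S)) p
        rwa [hM1, hM1] at h }
  refine ⟨LinearMap.fst A _ _ ∘ₗ EA ∘ₗ LinearMap.inl A _ _,
    LinearMap.snd A _ _ ∘ₗ EA ∘ₗ LinearMap.inr A _ _, fun j hj m m' hm => ?_, funext fun p => ?_⟩
  · have h := E.map_smul (TrivSqZeroExt.inr ⟨j, hj⟩) (Submodule.Quotient.mk m, 0)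
    rw [inr_smul_sepMod hM2, hfst, show (E (Submodule.Quotient.mk m, 0)).1 = _ from hm,
      inr_smul_sepMod hM2] at h
    exact congr_arg (fun p : SepMod A M => (p.2 : M)) h
  · calc E p = E (p.1, 0) + E (0, p.2) := by rw [← map_add]; simp
      _ = _ := by rw [hfst, hsnd, Prod.mk_add_mk, add_zero, zero_add]; rfl

variable (hπ : Function.Surjective π)
include hπ

theorem exists_linearMap_of_radCompatible
    {f : (M ⧸ radSubmodule A M) →ₗ[A] M ⧸ radSubmodule A M}
    {g : radSubmodule A M →ₗ[A] radSubmodule A M} (hfg : RadCompatible f g) :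
    ∃ E : SepMod A M →ₗ[SepAlg A S] SepMod A M, ⇑E = Prod.map f g := by
  refine ⟨{ toFun := Prod.map f g, map_add' := (f.prodMap g).map_add, map_smul' := ?_ }, rfl⟩
  rintro z ⟨x, u⟩
  obtain ⟨m, rfl⟩ := Submodule.Quotient.mk_surjective _ x
  obtain ⟨m', hm'⟩ := Submodule.Quotient.mk_surjective _ (f (Submodule.Quotient.mk m))
  obtain ⟨a, ha⟩ := hπ z.fst.1
  obtain ⟨b, hb⟩ := hπ z.fst.2
  change Prod.map f g (z • _) = z • Prod.map f g _
  rw [Prod.map_apply _ _ (Submodule.Quotient.mk m) u, ← hm',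
    ← TrivSqZeroExt.inl_fst_add_inr_snd_eq z, show z.fst = (π a, π b) from Prod.ext ha.symm hb.symm,
    add_smul, add_smul, hM1, hM1,
    inr_smul_sepMod hM2, inr_smul_sepMod hM2]
  refine Prod.ext ?_ (Subtype.ext ?_)
  · simp [hm']
  · simp [hfg _ z.snd.2 m m' hm'.symm]

theorem isIndecomposableModule_sepMod_iff :
    IsIndecomposableModule (SepAlg A S) (SepMod A M) ↔ IsSepIndecomposable A M := by
  refine and_congr exists_ne_zero_sepMod_iff ⟨fun h f g hf hg hfg => ?_, fun h E hE => ?_⟩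
  · obtain ⟨E, hE⟩ := exists_linearMap_of_radCompatible hM2 hM1 hπ hfg
    rcases h E ((LinearMap.comp_self_eq_iff_of_coe_eq_prod_map hE).mpr ⟨hf, hg⟩) with h0 | h1
    · exact .inl ((LinearMap.eq_iff_of_coe_eq_prod_map hE rfl).mp h0)
    · exact .inr ((LinearMap.eq_iff_of_coe_eq_prod_map hE rfl).mp h1)
  · obtain ⟨f, g, hfg, hE'⟩ := exists_radCompatible_of_linearMap hM2 hM1 E
    obtain ⟨hf, hg⟩ := (LinearMap.comp_self_eq_iff_of_coe_eq_prod_map hE').mp hE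
    rcases h f g hf hg hfg with h0 | h1
    · exact .inl ((LinearMap.eq_iff_of_coe_eq_prod_map hE' rfl).mpr h0)
    · exact .inr ((LinearMap.eq_iff_of_coe_eq_prod_map hE' rfl).mpr h1)

end SeparatedModule

theorem separated_functor_reflects_indecomposability_general
    (R : Type) [CommRing R] [IsArtinianRing R]
    (A : Type) [Ring A] [Algebra R A] [Module.Finite R A]
    (hJ2 : ∀ x ∈ Ideal.jacobson (⊥ : Ideal A), ∀ y ∈ Ideal.jacobson (⊥ : Ideal A),
      x * y = 0)
    (S : Type) [Ring S] (π : A →+* S) (hπ : Function.Surjective π)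
    [Module (S × S) (JacMod A)] [Module (S × S)ᵐᵒᵖ (JacMod A)]
    [SMulCommClass (S × S) (S × S)ᵐᵒᵖ (JacMod A)]
    (M : Type) [AddCommGroup M] [Module A M]
    [Module (SepAlg A S) (SepMod A M)]
    (hM1 : ∀ (x y : A) (p : SepMod A M),
      (TrivSqZeroExt.inl ((π x, π y) : S × S) : SepAlg A S) • p = (x • p.1, y • p.2))
    (hM2 : ∀ (j : JacMod A) (m : M) (u : ↥(radSubmodule A M)),
      ((TrivSqZeroExt.inr j : SepAlg A S) •
          ((Submodule.Quotient.mk m, u) : SepMod A M)).1 = 0 ∧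
      ((((TrivSqZeroExt.inr j : SepAlg A S) •
          ((Submodule.Quotient.mk m, u) : SepMod A M)).2 : M)) = (j : A) • m) :
    IsIndecomposableModule A M ↔
      IsIndecomposableModule (SepAlg A S) (SepMod A M) := by
  have : IsArtinianRing A := IsArtinianRing.of_finite R A
  rw [isIndecomposableModule_sepMod_iff hM2 hM1 hπ]
  exact ⟨IsIndecomposableModule.isSepIndecomposable,
    IsSepIndecomposable.isIndecomposableModule hJ2⟩

/-- With `A`, `A^s` and `S` as above (`rad²(A) = 0`), a module
`M ∈ Mod A` is indecomposable if and only if `S(M) = (M/JM; JM)` is indecomposable in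
`Mod A^s`. -/
theorem separated_functor_reflects_indecomposability
    (R : Type) [CommRing R] [IsArtinianRing R]
    (A : Type) [Ring A] [Algebra R A] [Module.Finite R A]
    (hJ2 : ∀ x ∈ Ideal.jacobson (⊥ : Ideal A), ∀ y ∈ Ideal.jacobson (⊥ : Ideal A),
      x * y = 0)
    (S : Type) [Ring S] (π : A →+* S) (hπ : Function.Surjective π)
    (hker : ∀ a : A, π a = 0 ↔ a ∈ Ideal.jacobson (⊥ : Ideal A))
    [Module (S × S) (JacMod A)] [Module (S × S)ᵐᵒᵖ (JacMod A)]
    [SMulCommClass (S × S) (S × S)ᵐᵒᵖ (JacMod A)]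
    (hL : ∀ (x y : A) (m : JacMod A),
      ((((π x, π y) : S × S) • m : JacMod A) : A) = y * (m : A))
    (hR : ∀ (x y : A) (m : JacMod A),
      (((MulOpposite.op ((π x, π y) : S × S)) • m : JacMod A) : A) = (m : A) * x)
    (M : Type) [AddCommGroup M] [Module A M]
    [Module (SepAlg A S) (SepMod A M)]
    (hM1 : ∀ (x y : A) (p : SepMod A M),
      (TrivSqZeroExt.inl ((π x, π y) : S × S) : SepAlg A S) • p = (x • p.1, y • p.2))
    (hM2 : ∀ (j : JacMod A) (m : M) (u : ↥(radSubmodule A M)),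
      ((TrivSqZeroExt.inr j : SepAlg A S) •
          ((Submodule.Quotient.mk m, u) : SepMod A M)).1 = 0 ∧
      ((((TrivSqZeroExt.inr j : SepAlg A S) •
          ((Submodule.Quotient.mk m, u) : SepMod A M)).2 : M)) = (j : A) • m) :
    IsIndecomposableModule A M ↔
      IsIndecomposableModule (SepAlg A S) (SepMod A M) :=
  separated_functor_reflects_indecomposability_general R A hJ2 S π hπ M hM1 hM2
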